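/- Let q ∈ ℂ, q ≠ 0, 1, α = x/(q−1−x), and let Ê(x;q) be the q-Euler series satisfying α σ_q(Ê) + Ê = (q−1)α. Then Y = Ê(x;q)² satisfies (1/(q−1)²)·(α σ_q + 1)·(α σ_q − 1/α)·Y = α·(σ_q(α) − 1) in ℂ((x)). -/

import Mathlib

noncomputable section

/-- The `q`-dilation operator `σ_q` on formal Laurent series: `(σ_q f)(x) = f(qx)`,
i.e. the coefficient of `xⁿ` is multiplied by `qⁿ`. -/
def sigmaq (q : ℂ) (f : LaurentSeries ℂ) : LaurentSeries ℂ :=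
  ⟨fun n => q ^ n * f.coeff n,
    f.isPWO_support'.mono (by
      intro n hn
      simp only [Function.mem_support] at hn ⊢
      exact fun h => hn (by rw [h, mul_zero]))⟩

/-- `α = x/(q−1−x)` as a formal Laurent series. -/
def alphaL (q : ℂ) : LaurentSeries ℂ :=
  HahnSeries.single 1 1 * (HahnSeries.C (q - 1) - HahnSeries.single 1 1)⁻¹

/-- The `q`-analog of the Euler series, as a Laurent series:
`Ê(x;q) = x + ∑_{n≥1} (−1)ⁿ [(1−q)(1−q²)⋯(1−qⁿ)/(1−q)ⁿ] x^{n+1}`. -/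
def qEulerAnalogL (q : ℂ) : LaurentSeries ℂ :=
  HahnSeries.ofPowerSeries ℤ ℂ
    (PowerSeries.mk fun m =>
      if m = 0 then 0
      else (-1) ^ (m - 1) * (∏ k ∈ Finset.Icc 1 (m - 1), (1 - q ^ k)) / (1 - q) ^ (m - 1))

namespace QEulerAux

variable {q : ℂ}

@[simp] lemma sigmaq_coeff (q : ℂ) (f : LaurentSeries ℂ) (n : ℤ) :
    (sigmaq q f).coeff n = q ^ n * f.coeff n := rfl

lemma sigmaq_support (hq : q ≠ 0) (f : LaurentSeries ℂ) :
    (sigmaq q f).support = f.support := by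
  ext n
  simp [HahnSeries.mem_support, zpow_ne_zero n hq]

lemma sigmaq_mul (hq : q ≠ 0) (f g : LaurentSeries ℂ) :
    sigmaq q (f * g) = sigmaq q f * sigmaq q g := by
  ext n
  rw [sigmaq_coeff, HahnSeries.coeff_mul, HahnSeries.coeff_mul]
  have hA : Finset.antidiagonal (sigmaq q f).isPWO_support (sigmaq q g).isPWO_support n
      = Finset.antidiagonal f.isPWO_support g.isPWO_support n := by
    ext ij
    simp only [Finset.mem_antidiagonal]
    rw [sigmaq_support hq, sigmaq_support hq]
  rw [hA, Finset.mul_sum]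
  refine Finset.sum_congr rfl fun ij hij => ?_
  rw [Finset.mem_antidiagonal] at hij
  rw [sigmaq_coeff, sigmaq_coeff, ← hij.2.2, zpow_add₀ hq]
  ring

lemma sigmaq_sub (f g : LaurentSeries ℂ) :
    sigmaq q (f - g) = sigmaq q f - sigmaq q g := by
  ext n; simp [mul_sub]

lemma sigmaq_C (a : ℂ) : sigmaq q (HahnSeries.C a) = HahnSeries.C a := by
  ext n
  rw [sigmaq_coeff, HahnSeries.C_apply, HahnSeries.coeff_single]
  split_ifs with h
  · subst h; simp
  · simp

lemma sigmaq_one : sigmaq q (1 : LaurentSeries ℂ) = 1 := by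
  simpa using sigmaq_C (q := q) 1

lemma C_mul_coeff (a : ℂ) (f : LaurentSeries ℂ) (n : ℤ) :
    (HahnSeries.C a * f).coeff n = a * f.coeff n := by
  rw [HahnSeries.C_apply, HahnSeries.coeff_single_zero_mul]

lemma sigmaq_C_mul (a : ℂ) (f : LaurentSeries ℂ) :
    sigmaq q (HahnSeries.C a * f) = HahnSeries.C a * sigmaq q f := by
  ext n
  rw [sigmaq_coeff, C_mul_coeff, C_mul_coeff, sigmaq_coeff]
  ring

lemma X_mul_coeff (f : LaurentSeries ℂ) (n : ℤ) :
    ((HahnSeries.single 1 1 : LaurentSeries ℂ) * f).coeff n = f.coeff (n - 1) := by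
  have h := HahnSeries.coeff_single_mul_add (r := (1 : ℂ)) (x := f) (a := n - 1) (b := 1)
  rw [sub_add_cancel] at h
  rw [h, one_mul]

/-- The coefficient function of the q-Euler series. -/
def eAux (q : ℂ) (m : ℕ) : ℂ :=
  if m = 0 then 0
  else (-1) ^ (m - 1) * (∏ k ∈ Finset.Icc 1 (m - 1), (1 - q ^ k)) / (1 - q) ^ (m - 1)

lemma E_coeff_nat (q : ℂ) (n : ℕ) :
    (qEulerAnalogL q).coeff (n : ℤ) = eAux q n := by
  rw [qEulerAnalogL, HahnSeries.ofPowerSeries_apply_coeff, PowerSeries.coeff_mk, eAux]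

lemma E_coeff_neg (q : ℂ) {n : ℤ} (hn : n < 0) :
    (qEulerAnalogL q).coeff n = 0 := by
  rw [qEulerAnalogL, HahnSeries.ofPowerSeries_apply]
  apply HahnSeries.embDomain_notin_range
  simp only [Function.Embedding.coeFn_mk, RelEmbedding.coe_mk, Set.mem_range, not_exists]
  intro m hm
  have hm' : ((m : ℕ) : ℤ) = n := hm
  omega

lemma eAux_rec (hq1 : q ≠ 1) {m : ℕ} (hm : 2 ≤ m) :
    q ^ (m - 1) * eAux q (m - 1) + (q - 1) * eAux q m - eAux q (m - 1) = 0 := by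
  obtain ⟨i, rfl⟩ : ∃ i, m = i + 2 := ⟨m - 2, by omega⟩
  have h1q : (1 : ℂ) - q ≠ 0 := sub_ne_zero_of_ne (Ne.symm hq1)
  simp only [eAux, show i + 2 - 1 = i + 1 from rfl, show i + 1 - 1 = i from rfl,
    Nat.add_eq_zero, and_false, if_false, Nat.succ_ne_zero]
  rw [Finset.prod_Icc_succ_top (Nat.le_add_left 1 i)]
  field_simp
  ring

/-- The cleared functional equation: `x·σ(Ê) + (C(q−1) − x)·Ê = C(q−1)·x`. -/
lemma funEq_cleared (hq0 : q ≠ 0) (hq1 : q ≠ 1) :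
    (HahnSeries.single 1 1 : LaurentSeries ℂ) * sigmaq q (qEulerAnalogL q)
      + (HahnSeries.C (q - 1) - HahnSeries.single 1 1) * qEulerAnalogL q
      = HahnSeries.C (q - 1) * (HahnSeries.single 1 1 : LaurentSeries ℂ) := by
  ext n
  rw [HahnSeries.coeff_add, X_mul_coeff, sub_mul, HahnSeries.coeff_sub, C_mul_coeff,
    X_mul_coeff, C_mul_coeff, HahnSeries.coeff_single, sigmaq_coeff]
  rcases lt_trichotomy n 0 with hn | hn | hn
  · rw [E_coeff_neg q hn, E_coeff_neg q (by omega : n - 1 < 0)]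
    have : ¬ n = 1 := by omega
    simp [this]
  · subst hn
    rw [show (0 : ℤ) - 1 = (-1 : ℤ) from rfl, E_coeff_neg q (by omega : (-1 : ℤ) < 0)]
    rw [show (0 : ℤ) = ((0 : ℕ) : ℤ) from rfl, E_coeff_nat]
    simp [eAux]
  · obtain ⟨m, rfl⟩ : ∃ m : ℕ, n = (m : ℤ) := ⟨n.toNat, by omega⟩
    have hm1 : 1 ≤ m := by exact_mod_cast hn
    have hsub : (m : ℤ) - 1 = ((m - 1 : ℕ) : ℤ) := by omega
    rw [hsub, E_coeff_nat, E_coeff_nat]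
    rcases eq_or_lt_of_le hm1 with h1 | h2
    · -- m = 1
      subst h1
      simp [eAux]
    · -- m ≥ 2
      have hm2 : 2 ≤ m := h2
      have hrec := eAux_rec hq1 hm2
      have : ¬ (m : ℤ) = 1 := by omega
      rw [zpow_natCast, if_neg this]
      linear_combination hrec

lemma D_ne_zero (hq1 : q ≠ 1) :
    (HahnSeries.C (q - 1) - HahnSeries.single 1 1 : LaurentSeries ℂ) ≠ 0 := by
  intro h
  have := congrArg (fun f : LaurentSeries ℂ => f.coeff 0) h
  simp only [HahnSeries.coeff_sub, HahnSeries.C_apply, HahnSeries.coeff_single,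
    HahnSeries.coeff_zero] at this
  norm_num at this
  exact hq1 (by linear_combination this)

lemma alphaL_ne_zero (hq1 : q ≠ 1) : alphaL q ≠ 0 :=
  mul_ne_zero (HahnSeries.single_ne_zero one_ne_zero) (inv_ne_zero (D_ne_zero hq1))

/-- The functional equation `α·σ(Ê) + Ê = C(q−1)·α`. -/
lemma funEq (hq0 : q ≠ 0) (hq1 : q ≠ 1) :
    alphaL q * sigmaq q (qEulerAnalogL q) + qEulerAnalogL q
      = HahnSeries.C (q - 1) * alphaL q := by
  have hD := D_ne_zero hq1
  have hDinv : (HahnSeries.C (q - 1) - HahnSeries.single 1 1 : LaurentSeries ℂ)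
      * (HahnSeries.C (q - 1) - HahnSeries.single 1 1 : LaurentSeries ℂ)⁻¹ = 1 :=
    mul_inv_cancel₀ hD
  have hP := funEq_cleared hq0 hq1
  rw [alphaL]
  linear_combination (HahnSeries.C (q - 1) - HahnSeries.single 1 1 : LaurentSeries ℂ)⁻¹ * hP
    - qEulerAnalogL q * hDinv

lemma hZ (hq0 : q ≠ 0) (hq1 : q ≠ 1) :
    alphaL q * sigmaq q (qEulerAnalogL q ^ 2) - (alphaL q)⁻¹ * qEulerAnalogL q ^ 2
      = HahnSeries.C ((q - 1) ^ 2) * alphaL q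
        - HahnSeries.C (2 * (q - 1)) * qEulerAnalogL q := by
  set A := alphaL q
  set E := qEulerAnalogL q
  set c : LaurentSeries ℂ := HahnSeries.C (q - 1)
  have hc2 : (HahnSeries.C ((q - 1) ^ 2) : LaurentSeries ℂ) = c ^ 2 := map_pow _ _ _
  have hc2' : (HahnSeries.C (2 * (q - 1)) : LaurentSeries ℂ) = 2 * c := by
    rw [map_mul, map_ofNat]
  have hAinv : A * A⁻¹ = 1 := mul_inv_cancel₀ (alphaL_ne_zero hq1)
  have hσE : A * sigmaq q E = c * A - E := by linear_combination funEq hq0 hq1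
  have hsq : sigmaq q (E ^ 2) = (sigmaq q E) ^ 2 := by
    rw [pow_two, pow_two, sigmaq_mul hq0]
  rw [hsq, hc2, hc2']
  linear_combination (A⁻¹ * (A * sigmaq q E + c * A - E)) * hσE
    + (c ^ 2 * A - 2 * c * E - A * (sigmaq q E) ^ 2) * hAinv

end QEulerAux

open QEulerAux in
/-- Remark 5.2 / eq. (5.14): `Y = Ê(x;q)²` satisfies
`(1/(q−1)²)·(α σ_q + 1)·(α σ_q − 1/α)·Y = α·(σ_q(α) − 1)`:
with `Z = α·σ_q(Y) − Y/α`, one has `(1/(q−1)²)(α·σ_q(Z) + Z) = α·(σ_q(α) − 1)`. -/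
theorem qEulerAnalog_sq_eq (q : ℂ) (hq0 : q ≠ 0) (hq1 : q ≠ 1) :
    ((q - 1) ^ 2)⁻¹ •
        (alphaL q *
            sigmaq q (alphaL q * sigmaq q (qEulerAnalogL q ^ 2)
              - (alphaL q)⁻¹ * qEulerAnalogL q ^ 2) +
          (alphaL q * sigmaq q (qEulerAnalogL q ^ 2)
            - (alphaL q)⁻¹ * qEulerAnalogL q ^ 2))
      = alphaL q * (sigmaq q (alphaL q) - 1) := by
  have hr : ((q - 1) ^ 2 : ℂ) ≠ 0 := pow_ne_zero 2 (sub_ne_zero_of_ne hq1)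
  rw [hZ hq0 hq1, inv_smul_eq_iff₀ hr]
  rw [sigmaq_sub, sigmaq_C_mul, sigmaq_C_mul]
  have hsmul : ((q - 1) ^ 2 : ℂ) • (alphaL q * (sigmaq q (alphaL q) - 1))
      = HahnSeries.C ((q - 1) ^ 2) * (alphaL q * (sigmaq q (alphaL q) - 1)) := by
    rw [HahnSeries.C_apply, HahnSeries.single_zero_mul_eq_smul]
  rw [hsmul]
  set A := alphaL q
  set E := qEulerAnalogL q
  set c : LaurentSeries ℂ := HahnSeries.C (q - 1)
  have hc2 : (HahnSeries.C ((q - 1) ^ 2) : LaurentSeries ℂ) = c ^ 2 := map_pow _ _ _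
  have hc2' : (HahnSeries.C (2 * (q - 1)) : LaurentSeries ℂ) = 2 * c := by
    rw [map_mul, map_ofNat]
  have hσE : A * sigmaq q E = c * A - E := by linear_combination funEq hq0 hq1
  rw [hc2, hc2']
  linear_combination (-(2 * c)) * hσE

end
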